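/- Let N ≥ 1 and let u : ℝ × ℝ → ℝ, U : ℝ × ℝ → ℝ^N be smooth solutions of u_t = u_{xxx} - (3/2)u²u_x + u_x⟨U,U⟩ + u⟨U,U_x⟩ + ⟨U,U_{xx}⟩ + ⟨U_x,U_x⟩ - (1/4)u²⟨U,U⟩ + (1/4)⟨U,U⟩² and U_t = (1/2)u_{xx}U + (1/2)⟨U,U_x⟩U - (1/4)u³U + (1/4)u⟨U,U⟩U. Then w := -u_x + (1/2)u² - (1/2)⟨U,U⟩ satisfies the KdV equation w_t = w_{xxx} - 3ww_x; moreover u satisfies u_t = -w_x u - (1/2)wu² - w_{xx} + w², and U satisfies U_t = -(1/2)(w_x + wu)U. -/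

import Mathlib

noncomputable section

/-- partial derivative in the first (space) variable -/
def pdx (f : ℝ → ℝ → ℝ) : ℝ → ℝ → ℝ := fun x t => deriv (fun y => f y t) x

/-- partial derivative in the second (time) variable -/
def pdt (f : ℝ → ℝ → ℝ) : ℝ → ℝ → ℝ := fun x t => deriv (fun s => f x s) t

/-- smoothness of a function of two real variables -/
def smooth2 (f : ℝ → ℝ → ℝ) : Prop := ContDiff ℝ (⊤ : ℕ∞) (fun p : ℝ × ℝ => f p.1 p.2)

/-- componentwise partial x-derivative of a vector-valued function -/
def pdxV {N : ℕ} (U : ℝ → ℝ → Fin N → ℝ) : ℝ → ℝ → Fin N → ℝ :=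
  fun x t i => deriv (fun y => U y t i) x

/-- componentwise partial t-derivative of a vector-valued function -/
def pdtV {N : ℕ} (U : ℝ → ℝ → Fin N → ℝ) : ℝ → ℝ → Fin N → ℝ :=
  fun x t i => deriv (fun s => U x s i) t

/-- pointwise Euclidean inner product of two vector-valued functions -/
def ip {N : ℕ} (A B : ℝ → ℝ → Fin N → ℝ) : ℝ → ℝ → ℝ :=
  fun x t => ∑ i, A x t i * B x t i

/-- componentwise smoothness of a vector-valued function of two real variables -/
def smooth2V {N : ℕ} (U : ℝ → ℝ → Fin N → ℝ) : Prop :=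
  ∀ i, ContDiff ℝ (⊤ : ℕ∞) (fun p : ℝ × ℝ => U p.1 p.2 i)

lemma smooth2.hasDerivAt_x {f : ℝ → ℝ → ℝ} (hf : smooth2 f) (x t : ℝ) :
    HasDerivAt (fun y => f y t) (pdx f x t) x := by
  have h : DifferentiableAt ℝ (fun y => f y t) x := by
    have h2 : ContDiff ℝ (⊤ : ℕ∞) (fun y : ℝ => f y t) := hf.comp (contDiff_id.prodMk contDiff_const)
    exact h2.differentiable (by simp) x
  exact h.hasDerivAt

lemma smooth2.hasDerivAt_t {f : ℝ → ℝ → ℝ} (hf : smooth2 f) (x t : ℝ) :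
    HasDerivAt (fun s => f x s) (pdt f x t) t := by
  have h : DifferentiableAt ℝ (fun s => f x s) t := by
    have h2 : ContDiff ℝ (⊤ : ℕ∞) (fun s : ℝ => f x s) := hf.comp (contDiff_const.prodMk contDiff_id)
    exact h2.differentiable (by simp) t
  exact h.hasDerivAt

lemma fderiv_slice_x {f : ℝ → ℝ → ℝ} (hf : smooth2 f) (x t : ℝ) :
    pdx f x t = fderiv ℝ (fun p : ℝ × ℝ => f p.1 p.2) (x, t) ((1:ℝ), (0:ℝ)) := by
  have h : HasFDerivAt (fun y : ℝ => (y, t)) ((ContinuousLinearMap.id ℝ ℝ).prod 0) x :=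
    (hasFDerivAt_id x).prodMk (hasFDerivAt_const t x)
  have h2 := ((hf.differentiable (by simp) (x, t)).hasFDerivAt.comp x h).hasDerivAt
  exact h2.deriv

lemma fderiv_slice_t {f : ℝ → ℝ → ℝ} (hf : smooth2 f) (x t : ℝ) :
    pdt f x t = fderiv ℝ (fun p : ℝ × ℝ => f p.1 p.2) (x, t) ((0:ℝ), (1:ℝ)) := by
  have h : HasFDerivAt (fun s : ℝ => (x, s)) ((0 : ℝ →L[ℝ] ℝ).prod (ContinuousLinearMap.id ℝ ℝ)) t :=
    (hasFDerivAt_const x t).prodMk (hasFDerivAt_id t)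
  have h2 := ((hf.differentiable (by simp) (x, t)).hasFDerivAt.comp t h).hasDerivAt
  exact h2.deriv

lemma smooth2_pdx {f : ℝ → ℝ → ℝ} (hf : smooth2 f) : smooth2 (pdx f) := by
  have h : (fun p : ℝ × ℝ => pdx f p.1 p.2)
      = fun p : ℝ × ℝ => (fderiv ℝ (fun q : ℝ × ℝ => f q.1 q.2) p) ((1:ℝ), (0:ℝ)) := by
    funext p; exact fderiv_slice_x hf p.1 p.2
  show ContDiff ℝ (⊤ : ℕ∞) _
  rw [h]
  exact (ContinuousLinearMap.apply ℝ ℝ ((1:ℝ), (0:ℝ))).contDiff.comp (hf.fderiv_right (by simp))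

lemma smooth2_pdt {f : ℝ → ℝ → ℝ} (hf : smooth2 f) : smooth2 (pdt f) := by
  have h : (fun p : ℝ × ℝ => pdt f p.1 p.2)
      = fun p : ℝ × ℝ => (fderiv ℝ (fun q : ℝ × ℝ => f q.1 q.2) p) ((0:ℝ), (1:ℝ)) := by
    funext p; exact fderiv_slice_t hf p.1 p.2
  show ContDiff ℝ (⊤ : ℕ∞) _
  rw [h]
  exact (ContinuousLinearMap.apply ℝ ℝ ((0:ℝ), (1:ℝ))).contDiff.comp (hf.fderiv_right (by simp))

lemma pdt_pdx_comm {f : ℝ → ℝ → ℝ} (hf : smooth2 f) (x t : ℝ) :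
    pdt (pdx f) x t = pdx (pdt f) x t := by
  set F : ℝ × ℝ → ℝ := fun p => f p.1 p.2 with hF
  have hdF : ∀ y, HasFDerivAt F (fderiv ℝ F y) y := fun y => (hf.differentiable (by simp) y).hasFDerivAt
  have hdF2 : HasFDerivAt (fderiv ℝ F) (fderiv ℝ (fderiv ℝ F) (x, t)) (x, t) :=
    (((hf.fderiv_right (m := (⊤ : ℕ∞)) (by simp)).differentiable (by simp)) (x, t)).hasFDerivAt
  have hsymm := second_derivative_symmetric hdF hdF2 ((1:ℝ), (0:ℝ)) ((0:ℝ), (1:ℝ))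
  have hcx : HasFDerivAt (fun p : ℝ × ℝ => fderiv ℝ F p ((1:ℝ), (0:ℝ)))
      ((ContinuousLinearMap.apply ℝ ℝ ((1:ℝ), (0:ℝ))).comp (fderiv ℝ (fderiv ℝ F) (x, t))) (x, t) :=
    (ContinuousLinearMap.apply ℝ ℝ ((1:ℝ), (0:ℝ))).hasFDerivAt.comp (x, t) hdF2
  have hct : HasFDerivAt (fun p : ℝ × ℝ => fderiv ℝ F p ((0:ℝ), (1:ℝ)))
      ((ContinuousLinearMap.apply ℝ ℝ ((0:ℝ), (1:ℝ))).comp (fderiv ℝ (fderiv ℝ F) (x, t))) (x, t) :=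
    (ContinuousLinearMap.apply ℝ ℝ ((0:ℝ), (1:ℝ))).hasFDerivAt.comp (x, t) hdF2
  have e1 : pdt (pdx f) x t = fderiv ℝ (fderiv ℝ F) (x, t) ((0:ℝ), (1:ℝ)) ((1:ℝ), (0:ℝ)) := by
    have h0 := fderiv_slice_t (smooth2_pdx hf) x t
    have h1 : (fun p : ℝ × ℝ => pdx f p.1 p.2) = fun p : ℝ × ℝ => fderiv ℝ F p ((1:ℝ), (0:ℝ)) := by
      funext p; exact fderiv_slice_x hf p.1 p.2
    rw [h0, h1, hcx.fderiv]
    rfl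
  have e2 : pdx (pdt f) x t = fderiv ℝ (fderiv ℝ F) (x, t) ((1:ℝ), (0:ℝ)) ((0:ℝ), (1:ℝ)) := by
    have h0 := fderiv_slice_x (smooth2_pdt hf) x t
    have h1 : (fun p : ℝ × ℝ => pdt f p.1 p.2) = fun p : ℝ × ℝ => fderiv ℝ F p ((0:ℝ), (1:ℝ)) := by
      funext p; exact fderiv_slice_t hf p.1 p.2
    rw [h0, h1, hct.fderiv]
    rfl
  rw [e1, e2, hsymm]

/-- full triangularization of system (4.29): KdV equation for `w`,
    a Riccati-type equation for `u` and a linear equation for `U`. -/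
theorem stmt_18 {N : ℕ} (hN : 1 ≤ N) (u : ℝ → ℝ → ℝ) (U : ℝ → ℝ → Fin N → ℝ)
    (hu : smooth2 u) (hU : smooth2V U)
    (heq1 : ∀ x t, pdt u x t = pdx (pdx (pdx u)) x t
      - (3/2) * (u x t) ^ 2 * pdx u x t + pdx u x t * ip U U x t
      + u x t * ip U (pdxV U) x t + ip U (pdxV (pdxV U)) x t
      + ip (pdxV U) (pdxV U) x t
      - (1/4) * (u x t) ^ 2 * ip U U x t + (1/4) * (ip U U x t) ^ 2)
    (heq2 : ∀ x t i, pdtV U x t i = (1/2) * pdx (pdx u) x t * U x t i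
      + (1/2) * ip U (pdxV U) x t * U x t i - (1/4) * (u x t) ^ 3 * U x t i
      + (1/4) * u x t * ip U U x t * U x t i)
    (w : ℝ → ℝ → ℝ)
    (hw : ∀ x t, w x t = -pdx u x t + (1/2) * (u x t) ^ 2 - (1/2) * ip U U x t) :
    (∀ x t, pdt w x t = pdx (pdx (pdx w)) x t - 3 * w x t * pdx w x t) ∧
    (∀ x t, pdt u x t = -pdx w x t * u x t - (1/2) * w x t * (u x t) ^ 2
      - pdx (pdx w) x t + (w x t) ^ 2) ∧
    (∀ x t i, pdtV U x t i =
      -(1/2) * (pdx w x t + w x t * u x t) * U x t i) := by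
  -- component smoothness and basic derivative facts
  have hUc : ∀ i, smooth2 (fun a b => U a b i) := fun i => hU i
  have hUx : ∀ (i : Fin N) (x t : ℝ), HasDerivAt (fun y => U y t i) (pdxV U x t i) x :=
    fun i x t => (hUc i).hasDerivAt_x x t
  have hUxx : ∀ (i : Fin N) (x t : ℝ),
      HasDerivAt (fun y => pdxV U y t i) (pdxV (pdxV U) x t i) x :=
    fun i x t => (smooth2_pdx (hUc i)).hasDerivAt_x x t
  have hUt : ∀ (i : Fin N) (x t : ℝ), HasDerivAt (fun s => U x s i) (pdtV U x t i) t :=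
    fun i x t => (hUc i).hasDerivAt_t x t
  -- w is smooth
  have hsw : smooth2 w := by
    have h : (fun p : ℝ × ℝ => w p.1 p.2) = fun p : ℝ × ℝ =>
        -pdx u p.1 p.2 + (1/2) * (u p.1 p.2) ^ 2 - (1/2) * ∑ i, U p.1 p.2 i * U p.1 p.2 i := by
      funext p; exact hw p.1 p.2
    show ContDiff ℝ (⊤ : ℕ∞) _
    rw [h]
    have h1 : ContDiff ℝ (⊤ : ℕ∞) (fun p : ℝ × ℝ => pdx u p.1 p.2) := smooth2_pdx hu
    have h2 : ContDiff ℝ (⊤ : ℕ∞) (fun p : ℝ × ℝ => u p.1 p.2) := hu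
    exact (h1.neg.add (contDiff_const.mul (h2.pow 2))).sub
      (contDiff_const.mul (ContDiff.sum fun i _ => (hU i).mul (hU i)))
  have hswx : smooth2 (pdx w) := smooth2_pdx hsw
  have hswxx : smooth2 (pdx (pdx w)) := smooth2_pdx hswx
  -- first x-derivative of w
  have hwx : ∀ x t : ℝ, pdx w x t = -pdx (pdx u) x t + u x t * pdx u x t - ip U (pdxV U) x t := by
    intro x t
    have hrw : (fun y => w y t) = fun y =>
        -pdx u y t + (1/2) * (u y t * u y t) - (1/2) * ∑ i, U y t i * U y t i := by
      funext y; rw [hw y t]; simp only [ip]; ring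
    have h : HasDerivAt (fun y => w y t)
        (-pdx (pdx u) x t + (1/2) * (pdx u x t * u x t + u x t * pdx u x t)
          - (1/2) * ∑ i, (pdxV U x t i * U x t i + U x t i * pdxV U x t i)) x := by
      rw [hrw]
      exact (((smooth2_pdx hu).hasDerivAt_x x t).neg.add
        (HasDerivAt.const_mul (1/2 : ℝ) ((hu.hasDerivAt_x x t).mul (hu.hasDerivAt_x x t)))).sub
        (HasDerivAt.const_mul (1/2 : ℝ) (HasDerivAt.fun_sum fun i _ => (hUx i x t).mul (hUx i x t)))
    have hsum : (∑ i, (pdxV U x t i * U x t i + U x t i * pdxV U x t i))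
        = 2 * ip U (pdxV U) x t := by
      simp only [ip, Finset.mul_sum]
      exact Finset.sum_congr rfl fun i _ => by ring
    have h2 : pdx w x t = _ := h.deriv
    rw [h2, hsum]; ring
  -- second x-derivative of w
  have hwxx : ∀ x t : ℝ, pdx (pdx w) x t = -pdx (pdx (pdx u)) x t + pdx u x t * pdx u x t
      + u x t * pdx (pdx u) x t - ip (pdxV U) (pdxV U) x t - ip U (pdxV (pdxV U)) x t := by
    intro x t
    have hrw : (fun y => pdx w y t) = fun y =>
        -pdx (pdx u) y t + u y t * pdx u y t - ∑ i, U y t i * pdxV U y t i := by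
      funext y; rw [hwx y t]; simp only [ip]
    have h : HasDerivAt (fun y => pdx w y t)
        (-pdx (pdx (pdx u)) x t + (pdx u x t * pdx u x t + u x t * pdx (pdx u) x t)
          - ∑ i, (pdxV U x t i * pdxV U x t i + U x t i * pdxV (pdxV U) x t i)) x := by
      rw [hrw]
      exact (((smooth2_pdx (smooth2_pdx hu)).hasDerivAt_x x t).neg.add
        ((hu.hasDerivAt_x x t).mul ((smooth2_pdx hu).hasDerivAt_x x t))).sub
        (HasDerivAt.fun_sum fun i _ => (hUx i x t).mul (hUxx i x t))
    have h2 : pdx (pdx w) x t = _ := h.deriv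
    rw [h2, Finset.sum_add_distrib]
    simp only [ip]
    ring
  -- claim 2: the Riccati-type equation for u
  have claim2 : ∀ x t : ℝ, pdt u x t = -pdx w x t * u x t - (1/2) * w x t * (u x t) ^ 2
      - pdx (pdx w) x t + (w x t) ^ 2 := by
    intro x t
    rw [heq1 x t, hwxx x t, hwx x t, hw x t]
    ring
  -- claim 3: the linear equation for U
  have claim3 : ∀ (x t : ℝ) (i : Fin N),
      pdtV U x t i = -(1/2) * (pdx w x t + w x t * u x t) * U x t i := by
    intro x t i
    rw [heq2 x t i, hwx x t, hw x t]
    ring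
  -- x-derivative of the Riccati right-hand side
  have hGx : ∀ x t : ℝ, pdx (pdt u) x t = -(pdx (pdx w) x t * u x t) - pdx w x t * pdx u x t
      - (1/2) * pdx w x t * (u x t) ^ 2 - w x t * u x t * pdx u x t
      - pdx (pdx (pdx w)) x t + 2 * w x t * pdx w x t := by
    intro x t
    have hrw : (fun y => pdt u y t) = fun y =>
        -(pdx w y t * u y t) - (1/2) * (w y t * (u y t * u y t))
          - pdx (pdx w) y t + w y t * w y t := by
      funext y; rw [claim2 y t]; ring
    have h : HasDerivAt (fun y => pdt u y t)
        (-(pdx (pdx w) x t * u x t + pdx w x t * pdx u x t)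
          - (1/2) * (pdx w x t * (u x t * u x t)
            + w x t * (pdx u x t * u x t + u x t * pdx u x t))
          - pdx (pdx (pdx w)) x t + (pdx w x t * w x t + w x t * pdx w x t)) x := by
      rw [hrw]
      exact (((((hswx.hasDerivAt_x x t).mul (hu.hasDerivAt_x x t)).neg).sub
        (HasDerivAt.const_mul (1/2 : ℝ) ((hsw.hasDerivAt_x x t).mul
          ((hu.hasDerivAt_x x t).mul (hu.hasDerivAt_x x t))))).sub
        (hswxx.hasDerivAt_x x t)).add ((hsw.hasDerivAt_x x t).mul (hsw.hasDerivAt_x x t))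
    have h2 : pdx (pdt u) x t = _ := h.deriv
    rw [h2]; ring
  -- t-derivative of w
  have hwt : ∀ x t : ℝ,
      pdt w x t = -pdt (pdx u) x t + u x t * pdt u x t - ip U (pdtV U) x t := by
    intro x t
    have hrw : (fun s => w x s) = fun s =>
        -pdx u x s + (1/2) * (u x s * u x s) - (1/2) * ∑ i, U x s i * U x s i := by
      funext s; rw [hw x s]; simp only [ip]; ring
    have h : HasDerivAt (fun s => w x s)
        (-pdt (pdx u) x t + (1/2) * (pdt u x t * u x t + u x t * pdt u x t)
          - (1/2) * ∑ i, (pdtV U x t i * U x t i + U x t i * pdtV U x t i)) t := by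
      rw [hrw]
      exact (((smooth2_pdx hu).hasDerivAt_t x t).neg.add
        (HasDerivAt.const_mul (1/2 : ℝ) ((hu.hasDerivAt_t x t).mul (hu.hasDerivAt_t x t)))).sub
        (HasDerivAt.const_mul (1/2 : ℝ) (HasDerivAt.fun_sum fun i _ => (hUt i x t).mul (hUt i x t)))
    have hsum : (∑ i, (pdtV U x t i * U x t i + U x t i * pdtV U x t i))
        = 2 * ip U (pdtV U) x t := by
      simp only [ip, Finset.mul_sum]
      exact Finset.sum_congr rfl fun i _ => by ring
    have h2 : pdt w x t = _ := h.deriv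
    rw [h2, hsum]; ring
  -- claim 1: the KdV equation for w
  have claim1 : ∀ x t : ℝ, pdt w x t = pdx (pdx (pdx w)) x t - 3 * w x t * pdx w x t := by
    intro x t
    have hcomm := pdt_pdx_comm hu x t
    have hip2 : ip U (pdtV U) x t = -(1/2) * (pdx w x t + w x t * u x t) * ip U U x t := by
      have hterm : ∀ i ∈ Finset.univ (α := Fin N), U x t i * pdtV U x t i
          = (-(1/2) * (pdx w x t + w x t * u x t)) * (U x t i * U x t i) := by
        intro i _; rw [claim3 x t i]; ring
      calc ip U (pdtV U) x t = ∑ i, U x t i * pdtV U x t i := rfl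
        _ = ∑ i, (-(1/2) * (pdx w x t + w x t * u x t)) * (U x t i * U x t i) :=
            Finset.sum_congr rfl hterm
        _ = -(1/2) * (pdx w x t + w x t * u x t) * ∑ i, U x t i * U x t i := by
            rw [Finset.mul_sum]
        _ = _ := rfl
    have hSw : ip U U x t = -2 * pdx u x t + (u x t) ^ 2 - 2 * w x t := by
      have := hw x t; linarith
    rw [hwt x t, hcomm, hGx x t, claim2 x t, hip2, hSw]
    ring
  exact ⟨claim1, claim2, claim3⟩
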